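/- For every integer n ≥ 2, the fraction 1/n is the value of the word L^{n−1} in the Farey binary tree, and the reduced degree sequence of the Haros graph G_{1/n} consists of exactly one entry equal to 2, exactly n − 2 entries equal to 3, and one entry equal to n + 2 (the boundary degree). Consequently S(1/n) = −(2/n)·ln(1/n) − (1 − 2/n)·ln(1 − 2/n) and H(1/n) = 0. -/

import Mathlib

/-- Symbols for paths in the Farey binary tree. -/
inductive LR
  | L
  | R
deriving DecidableEq

/-- One step in the Farey binary tree: update the current pair of fractions
(represented as pairs (numerator, denominator) of naturals). -/
def fareyStep : ((ℕ × ℕ) × (ℕ × ℕ)) → LR → ((ℕ × ℕ) × (ℕ × ℕ))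
  | ((a, b), (c, d)), LR.L => ((a, b), (a + c, b + d))
  | ((a, b), (c, d)), LR.R => ((a + c, b + d), (c, d))

/-- The final pair of fractions of a word: after reading the first symbol `L`
the current pair is (0/1, 1/1); the remaining symbols update it. -/
def finalPair (w : List LR) : (ℕ × ℕ) × (ℕ × ℕ) :=
  w.tail.foldl fareyStep ((0, 1), (1, 1))

/-- The value ⟨w⟩ of a word: the mediant of its final pair, as (numerator, denominator). -/
def value (w : List LR) : ℕ × ℕ :=
  ((finalPair w).1.1 + (finalPair w).2.1, (finalPair w).1.2 + (finalPair w).2.2)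

/-- A word over {L,R} is a Farey word when its first symbol is `L`. -/
def IsFareyWord (w : List LR) : Prop := w.head? = some LR.L

/-- Concatenation of degree sequences:
[a₁,…,a_s] ⊕ [b₁,…,b_t] = [a₁+1, a₂, …, a_{s−1}, a_s+b₁, b₂, …, b_{t−1}, b_t+1]. -/
def oplus (A B : List ℕ) : List ℕ :=
  (A.dropLast.modifyHead (· + 1)) ++ [A.getLastD 0 + B.headD 0] ++ B.tail.dropLast
    ++ [B.getLastD 0 + 1]

/-- Update of the pair (D(left ancestor), D(right ancestor)) of unreduced degree
sequences along one symbol. -/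
def degStep : (List ℕ × List ℕ) → LR → (List ℕ × List ℕ)
  | (A, B), LR.L => (A, oplus A B)
  | (A, B), LR.R => (oplus A B, B)

/-- The pair (D(a/b), D(c/d)) of unreduced degree sequences of the final pair of a word;
0/1 and 1/1 are both assigned the list [1,1]. -/
def degPair (w : List LR) : List ℕ × List ℕ :=
  w.tail.foldl degStep ([1, 1], [1, 1])

/-- The unreduced degree sequence D(⟨w⟩) = D(a/b) ⊕ D(c/d) of the value of a word. -/
def Dseq (w : List LR) : List ℕ :=
  oplus (degPair w).1 (degPair w).2

/-- Reduction: [k₁,…,k_{q+1}] becomes [k₂,…,k_q, k₁+k_{q+1}]; the last entry is the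
boundary degree and the remaining ones are the inner degrees. -/
def reduce (D : List ℕ) : List ℕ :=
  D.tail.dropLast ++ [D.headD 0 + D.getLastD 0]

/-- The reduced degree sequence of the Haros graph G_{⟨w⟩}. -/
def degSeq (w : List LR) : List ℕ := reduce (Dseq w)

/-- Degree-distribution entropy S of the Haros graph G_{⟨w⟩}:
S = −Σ_k P(k)·ln P(k), summed over the degree values occurring in the reduced
degree sequence, where P(k) = m(k)/q. -/
noncomputable def Sent (w : List LR) : ℝ :=
  -∑ k ∈ (degSeq w).toFinset,
    (((degSeq w).count k : ℝ) / ((value w).2 : ℝ)) *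
      Real.log (((degSeq w).count k : ℝ) / ((value w).2 : ℝ))

/-- Reduced entropy H of the Haros graph G_{⟨w⟩} (with the convention 0·ln 0 = 0,
automatic since Real.log 0 = 0). -/
noncomputable def Hent (w : List LR) : ℝ :=
  let x : ℝ := ((value w).1 : ℝ) / ((value w).2 : ℝ)
  if x ≤ 1 / 2 then
    Sent w + 2 * x * Real.log x + (1 - 2 * x) * Real.log (1 - 2 * x)
  else
    Sent w + 2 * (1 - x) * Real.log (1 - x) + (2 * x - 1) * Real.log (2 * x - 1)

/-!
Along the left spine `L^(k+1)` the left ancestor stays `0/1`, whose degree sequence is `[1, 1]`,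
while the right ancestor is the previous value `1/(k+1)`. Hence `D(1/(k+2)) = [1, 1] ⊕ D(1/(k+1))`,
and induction gives `D(1/(k+2)) = [2, 3, …, 3, 2, k+2]`, which reduces to `k` threes, one `2` and
the boundary degree `k+4`. The entropy is then a sum of three terms, and at `x = 1/n` the correction
`2x ln x + (1-2x) ln(1-2x)` cancels it exactly.
-/

lemma List.sum_toFinset_count_of_subset {α M : Type*} [DecidableEq α] [AddCommMonoid M]
    {l : List α} {s : Finset α} (h : l.toFinset ⊆ s) (f : ℕ → M) (hf : f 0 = 0) :
    ∑ k ∈ l.toFinset, f (l.count k) = ∑ k ∈ s, f (l.count k) :=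
  Finset.sum_subset h fun k _ hk => by
    rw [List.count_eq_zero_of_not_mem (by simpa using hk), hf]

section LeftChild

variable {w : List LR}

lemma finalPair_append_L (hw : w ≠ []) :
    finalPair (w ++ [LR.L]) = ((finalPair w).1, value w) := by
  rw [finalPair, List.tail_append_singleton_of_ne_nil hw, List.foldl_append]
  rfl

lemma value_append_L (hw : w ≠ []) :
    value (w ++ [LR.L]) = ((finalPair w).1.1 + (value w).1, (finalPair w).1.2 + (value w).2) := by
  rw [value, finalPair_append_L hw]

lemma degPair_append_L (hw : w ≠ []) :
    degPair (w ++ [LR.L]) = ((degPair w).1, Dseq w) := by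
  rw [degPair, List.tail_append_singleton_of_ne_nil hw, List.foldl_append]
  rfl

lemma Dseq_append_L (hw : w ≠ []) :
    Dseq (w ++ [LR.L]) = oplus (degPair w).1 (Dseq w) := by
  rw [Dseq, degPair_append_L hw]

end LeftChild

lemma finalPair_replicate_L_fst (k : ℕ) : (finalPair (List.replicate (k + 1) LR.L)).1 = (0, 1) := by
  induction k with
  | zero => rfl
  | succ k ih =>
    rw [List.replicate_succ', finalPair_append_L (by simp), ih]

lemma value_replicate_L (k : ℕ) : value (List.replicate (k + 1) LR.L) = (1, k + 2) := by
  induction k with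
  | zero => rfl
  | succ k ih =>
    rw [List.replicate_succ', value_append_L (by simp), finalPair_replicate_L_fst, ih]
    exact Prod.ext rfl (by simp only; omega)

lemma degPair_replicate_L_fst (k : ℕ) : (degPair (List.replicate (k + 1) LR.L)).1 = [1, 1] := by
  induction k with
  | zero => rfl
  | succ k ih =>
    rw [List.replicate_succ', degPair_append_L (by simp), ih]

lemma oplus_one_one_cons_replicate_three (k : ℕ) :
    oplus [1, 1] (2 :: (List.replicate k 3 ++ [2, k + 2]))
      = 2 :: (List.replicate (k + 1) 3 ++ [2, k + 3]) := by
  simp [oplus, List.getLastD, List.dropLast_append_of_ne_nil, List.replicate_succ]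

lemma Dseq_replicate_L (k : ℕ) :
    Dseq (List.replicate (k + 1) LR.L) = 2 :: (List.replicate k 3 ++ [2, k + 2]) := by
  induction k with
  | zero => rfl
  | succ k ih =>
    rw [List.replicate_succ', Dseq_append_L (by simp), degPair_replicate_L_fst, ih,
      oplus_one_one_cons_replicate_three]

lemma degSeq_replicate_L (k : ℕ) :
    degSeq (List.replicate (k + 1) LR.L) = List.replicate k 3 ++ [2, k + 4] := by
  rw [degSeq, Dseq_replicate_L, reduce]
  simp [List.getLastD, List.dropLast_append_of_ne_nil]
  omega

lemma length_degSeq_replicate_L (k : ℕ) :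
    (degSeq (List.replicate (k + 1) LR.L)).length = k + 2 := by
  simp [degSeq_replicate_L]

lemma count_two_degSeq_replicate_L (k : ℕ) :
    (degSeq (List.replicate (k + 1) LR.L)).count 2 = 1 := by
  simp [degSeq_replicate_L, List.count_replicate]

lemma count_three_degSeq_replicate_L (k : ℕ) :
    (degSeq (List.replicate (k + 1) LR.L)).count 3 = k := by
  simp [degSeq_replicate_L]

lemma count_boundary_degSeq_replicate_L (k : ℕ) :
    (degSeq (List.replicate (k + 1) LR.L)).count (k + 4) = 1 := by
  simp [degSeq_replicate_L, List.count_replicate]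

/-- The value `3` is included even when `k = 0`: its zero count contributes `0 · ln 0 = 0`. -/
lemma Sent_replicate_L (k : ℕ) :
    Sent (List.replicate (k + 1) LR.L)
      = -(2 / ((k + 2 : ℕ) : ℝ)) * Real.log (1 / ((k + 2 : ℕ) : ℝ))
        - (1 - 2 / ((k + 2 : ℕ) : ℝ)) * Real.log (1 - 2 / ((k + 2 : ℕ) : ℝ)) := by
  have hsub : (degSeq (List.replicate (k + 1) LR.L)).toFinset ⊆ {2, 3, k + 4} := by
    intro x
    simp [degSeq_replicate_L]
    omega
  unfold Sent
  rw [value_replicate_L, List.sum_toFinset_count_of_subset hsub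
    (fun c => ((c : ℝ) / ((k + 2 : ℕ) : ℝ)) * Real.log ((c : ℝ) / ((k + 2 : ℕ) : ℝ))) (by simp)]
  rw [Finset.sum_insert (by simp), Finset.sum_insert (by simp), Finset.sum_singleton,
    count_two_degSeq_replicate_L, count_three_degSeq_replicate_L,
    count_boundary_degSeq_replicate_L]
  have hfrac : ((k : ℕ) : ℝ) / ((k + 2 : ℕ) : ℝ) = 1 - 2 / ((k + 2 : ℕ) : ℝ) := by
    field_simp
    push_cast
    ring
  rw [hfrac]
  push_cast
  ring

lemma Hent_replicate_L (k : ℕ) : Hent (List.replicate (k + 1) LR.L) = 0 := by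
  have hx : (1 : ℝ) / ((k + 2 : ℕ) : ℝ) ≤ 1 / 2 := by
    gcongr
    exact_mod_cast Nat.le_add_left 2 k
  simp only [Hent, value_replicate_L, Nat.cast_one, if_pos hx, Sent_replicate_L, mul_one_div]
  ring

/-- for n ≥ 2 the word L^{n−1} has value 1/n, and the reduced degree
sequence of G_{1/n} consists of exactly one entry 2, exactly n − 2 entries 3 and one
entry n + 2 (the boundary degree); consequently
S(1/n) = −(2/n)·ln(1/n) − (1 − 2/n)·ln(1 − 2/n) and H(1/n) = 0. -/
theorem statement15 (n : ℕ) (hn : 2 ≤ n) :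
    value (List.replicate (n - 1) LR.L) = (1, n) ∧
    (degSeq (List.replicate (n - 1) LR.L)).length = n ∧
    (degSeq (List.replicate (n - 1) LR.L)).count 2 = 1 ∧
    (degSeq (List.replicate (n - 1) LR.L)).count 3 = n - 2 ∧
    (degSeq (List.replicate (n - 1) LR.L)).count (n + 2) = 1 ∧
    Sent (List.replicate (n - 1) LR.L)
      = -(2 / (n : ℝ)) * Real.log (1 / (n : ℝ))
        - (1 - 2 / (n : ℝ)) * Real.log (1 - 2 / (n : ℝ)) ∧
    Hent (List.replicate (n - 1) LR.L) = 0 := by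
  obtain ⟨k, rfl⟩ : ∃ k, n = k + 2 := ⟨n - 2, by omega⟩
  rw [show k + 2 - 1 = k + 1 from rfl]
  exact ⟨value_replicate_L k, length_degSeq_replicate_L k, count_two_degSeq_replicate_L k,
    count_three_degSeq_replicate_L k, count_boundary_degSeq_replicate_L k, Sent_replicate_L k,
    Hent_replicate_L k⟩
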